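/- arXiv:2408.03187 — 2 statements merged into one kernel-verified Lean document; each statement's English description precedes it below -/
import Mathlib

section
/- The minimal KPP speed strictly exceeds the bistable wave speed: c_m > c_b, i.e. 2·√(f_m'(0)) > c_b. -/
open Real Filter Set

noncomputable section

/-- Hypotheses on a KPP nonlinearity `f_m`. -/
structure KPPHyp (fm : ℝ → ℝ) : Prop where
  smooth : ContDiff ℝ 1 fm
  zero : fm 0 = 0
  one : fm 1 = 0
  pos : ∀ s ∈ Set.Ioo (0:ℝ) 1, 0 < fm s
  le_lin : ∀ s ∈ Set.Ioo (0:ℝ) 1, fm s ≤ deriv fm 0 * s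
  deriv_one_neg : deriv fm 1 < 0
  neg : ∀ s : ℝ, 1 < s → fm s < 0

/-- The minimal KPP wave speed `c_m = 2√(f_m'(0))`. -/
def cm (fm : ℝ → ℝ) : ℝ := 2 * Real.sqrt (deriv fm 0)

/-- Hypotheses on a bistable nonlinearity `f_b` with interior zero `θ`. -/
structure BistableHyp (fb : ℝ → ℝ) (θ : ℝ) : Prop where
  smooth : ContDiff ℝ 1 fb
  theta_mem : θ ∈ Set.Ioo (0:ℝ) 1
  zero : fb 0 = 0
  at_theta : fb θ = 0
  one : fb 1 = 0
  d0 : deriv fb 0 < 0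
  dtheta : 0 < deriv fb θ
  d1 : deriv fb 1 < 0
  pos : ∀ s ∈ Set.Ioo θ 1, 0 < fb s
  neg_low : ∀ s ∈ Set.Ioo (0:ℝ) θ, fb s < 0
  neg_high : ∀ s : ℝ, 1 < s → fb s < 0

/-- The bistable traveling front `φ` with speed `c_b`, normalized by `φ(0) = θ`. -/
structure FrontHyp (fb : ℝ → ℝ) (θ cb : ℝ) (φ : ℝ → ℝ) : Prop where
  smooth : ContDiff ℝ 2 φ
  mem_Ioo : ∀ x, φ x ∈ Set.Ioo (0:ℝ) 1
  decreasing : ∀ x, deriv φ x < 0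
  ode : ∀ x, deriv (deriv φ) x + cb * deriv φ x + fb (φ x) = 0
  limBot : Filter.Tendsto φ Filter.atBot (nhds 1)
  limTop : Filter.Tendsto φ Filter.atTop (nhds 0)
  normalized : φ 0 = θ

/-- The heterogeneous KPP-transition-bistable reaction term `f(x,s)`. -/
structure HeterogHyp (fm fb : ℝ → ℝ) (L : ℝ) (f : ℝ → ℝ → ℝ) : Prop where
  Lpos : 0 < L
  smooth : ContDiff ℝ 2 (fun p : ℝ × ℝ => f p.1 p.2)
  lip : ∀ R : ℝ, 0 < R → ∃ K : ℝ, ∀ x : ℝ, ∀ s ∈ Set.Icc (-R) R, ∀ s' ∈ Set.Icc (-R) R,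
      |f x s - f x s'| ≤ K * |s - s'|
  zero : ∀ x, f x 0 = 0
  one : ∀ x, f x 1 = 0
  ds_one_neg : ∀ x, deriv (fun s => f x s) 1 < 0
  nonpos : ∀ x : ℝ, ∀ s : ℝ, 1 ≤ s → f x s ≤ 0
  eq_left : ∀ x : ℝ, x ≤ -L → ∀ s : ℝ, 0 ≤ s → f x s = fm s
  eq_right : ∀ x : ℝ, L ≤ x → ∀ s : ℝ, 0 ≤ s → f x s = fb s
  mono : ∀ s : ℝ, 0 ≤ s → AntitoneOn (fun x => f x s) (Set.Icc (-L) L)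

/-- A (bounded, nonnegative) solution of the Cauchy problem
`u_t = u_xx + c u_x + f(x,u)`, `u(0,·) = u₀`, with `u₀` continuous, nonnegative,
compactly supported and not identically zero. -/
structure CauchyHyp (f : ℝ → ℝ → ℝ) (c : ℝ) (u0 : ℝ → ℝ) (u : ℝ → ℝ → ℝ) : Prop where
  u0_cont : Continuous u0
  u0_nonneg : ∀ x, 0 ≤ u0 x
  u0_cpt : HasCompactSupport u0
  u0_ne : u0 ≠ 0
  nonneg : ∀ t : ℝ, 0 ≤ t → ∀ x, 0 ≤ u t x
  bdd : ∃ M : ℝ, ∀ t : ℝ, 0 ≤ t → ∀ x, u t x ≤ M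
  cont : ContinuousOn (fun p : ℝ × ℝ => u p.1 p.2) (Set.Ici 0 ×ˢ Set.univ)
  t_diff : ∀ t : ℝ, 0 < t → ∀ x : ℝ, DifferentiableAt ℝ (fun τ => u τ x) t
  x_smooth : ∀ t : ℝ, 0 < t → ContDiff ℝ 2 (fun y => u t y)
  pde : ∀ t : ℝ, 0 < t → ∀ x : ℝ,
      deriv (fun τ => u τ x) t =
        deriv (deriv (fun y => u t y)) x + c * deriv (fun y => u t y) x + f x (u t x)
  init : ∀ x, u 0 x = u0 x

/-- A positive bounded stationary solution connecting `1` at `-∞` to `0` at `+∞`. -/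
def IsFrontStat (f : ℝ → ℝ → ℝ) (c : ℝ) (U : ℝ → ℝ) : Prop :=
  ContDiff ℝ 2 U ∧ (∀ x, 0 < U x) ∧ (∃ M : ℝ, ∀ x, U x ≤ M) ∧
  (∀ x, deriv (deriv U) x + c * deriv U x + f x (U x) = 0) ∧
  Filter.Tendsto U Filter.atBot (nhds 1) ∧ Filter.Tendsto U Filter.atTop (nhds 0)

/-! Suppose `c_b ≥ 2l` with `l = √(f_m'(0))`. Since `f_b(s) ≤ f_m(s) ≤ l² s`, the function
`(φ' + lφ) e^{lx}` is nondecreasing, i.e. `φ e^{lx}` is convex; it is bounded as `x → -∞`, so it is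
nondecreasing, which gives `φ' + lφ ≥ 0`. Far to the right `φ < θ`, where `f_b(φ) < 0` makes
`φ' + c_b φ` nondecreasing; if it were positive somewhere there, `φ → 0` would force `φ' > 0`
eventually. Hence `φ' + c_b φ ≤ 0` there, whereas `φ' + c_b φ ≥ φ' + 2lφ ≥ lφ > 0`. -/

open Topology

theorem KPPHyp.deriv_zero_pos {fm : ℝ → ℝ} (h : KPPHyp fm) : 0 < deriv fm 0 := by
  have hpos := h.pos (1 / 2) (by norm_num)
  have hle := h.le_lin (1 / 2) (by norm_num)
  linarith

theorem nonneg_of_monotone_of_isBoundedUnder_atBot {g g' : ℝ → ℝ}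
    (hg : ∀ x, HasDerivAt g (g' x) x) (hg' : Monotone g')
    (hbdd : IsBoundedUnder (· ≤ ·) atBot g) (x : ℝ) : 0 ≤ g' x := by
  by_contra! hx
  have hlin : ∀ y ≤ x, g x + g' x * (y - x) ≤ g y := by
    intro y hy
    have := (convex_Iic x).image_sub_le_mul_sub_of_deriv_le
      (fun z _ => (hg z).continuousAt.continuousWithinAt)
      (fun z _ => (hg z).differentiableAt.differentiableWithinAt)
      (fun z hz => by rw [(hg z).deriv]; exact hg' (mem_Iic.1 (interior_subset hz)))
      y hy x self_mem_Iic hy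
    linarith
  have hlin_top : Tendsto (fun y => g x + g' x * (y - x)) atBot atTop :=
    tendsto_atTop_add_const_left _ _
      (tendsto_atBot_add_const_right _ (-x) tendsto_id |>.const_mul_atBot_of_neg hx)
  exact not_isBoundedUnder_of_tendsto_atTop
    (tendsto_atTop_mono' _ ((eventually_le_atBot x).mono hlin) hlin_top) hbdd

theorem eventually_pos_of_monotoneOn_add_mul {φ φ' : ℝ → ℝ} {c a : ℝ}
    (hmono : MonotoneOn (fun x => φ' x + c * φ x) (Ici a)) (hφ : Tendsto φ atTop (𝓝 0))
    (ha : 0 < φ' a + c * φ a) : ∀ᶠ x in atTop, 0 < φ' x := by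
  have hsmall : ∀ᶠ x in atTop, c * φ x < φ' a + c * φ a :=
    (by simpa using hφ.const_mul c : Tendsto (fun x => c * φ x) atTop (𝓝 0)).eventually_lt_const ha
  filter_upwards [hsmall, eventually_ge_atTop a] with x hx hax
  have := hmono self_mem_Ici hax hax
  linarith

namespace FrontHyp

variable {fb : ℝ → ℝ} {θ cb : ℝ} {φ : ℝ → ℝ}

theorem hasDerivAt (hφ : FrontHyp fb θ cb φ) (x : ℝ) : HasDerivAt φ (deriv φ x) x :=
  (hφ.smooth.differentiable (by norm_num) x).hasDerivAt

theorem hasDerivAt_deriv (hφ : FrontHyp fb θ cb φ) (x : ℝ) :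
    HasDerivAt (deriv φ) (-(cb * deriv φ x) - fb (φ x)) x := by
  have hφ' : Differentiable ℝ (deriv φ) :=
    (ContDiff.deriv' (n := 1) hφ.smooth).differentiable one_ne_zero
  exact (hφ' x).hasDerivAt.congr_deriv (by linarith [hφ.ode x])

theorem deriv_add_mul_nonneg (hφ : FrontHyp fb θ cb φ) {l : ℝ} (hl : 0 ≤ l) (hcb : 2 * l ≤ cb)
    (hfb : ∀ s ∈ Ioo (0 : ℝ) 1, fb s ≤ l ^ 2 * s) (x : ℝ) : 0 ≤ deriv φ x + l * φ x := by
  have hexp : ∀ y, HasDerivAt (fun y => exp (l * y)) (l * exp (l * y)) y := fun y => by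
    simpa [mul_comm] using ((hasDerivAt_id y).const_mul l).exp
  have hg : ∀ y, HasDerivAt (fun y => φ y * exp (l * y)) ((deriv φ y + l * φ y) * exp (l * y)) y :=
    fun y => ((hφ.hasDerivAt y).mul (hexp y)).congr_deriv (by ring)
  have hg' : ∀ y, HasDerivAt (fun y => (deriv φ y + l * φ y) * exp (l * y))
      (((2 * l - cb) * deriv φ y + (l ^ 2 * φ y - fb (φ y))) * exp (l * y)) y :=
    fun y => (((hφ.hasDerivAt_deriv y).add ((hφ.hasDerivAt y).const_mul l)).mul
      (hexp y)).congr_deriv (by simp only [Pi.add_apply]; ring)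
  have hmono : Monotone fun y => (deriv φ y + l * φ y) * exp (l * y) := by
    refine monotone_of_hasDerivAt_nonneg hg' fun y => mul_nonneg ?_ (exp_pos _).le
    have hdrift := mul_nonneg_of_nonpos_of_nonpos (sub_nonpos.2 hcb) (hφ.decreasing y).le
    linarith [hfb _ (hφ.mem_Ioo y)]
  have hbdd : IsBoundedUnder (· ≤ ·) atBot fun y => φ y * exp (l * y) := by
    refine isBoundedUnder_of_eventually_le (a := 1) ((eventually_le_atBot 0).mono fun y hy => ?_)
    exact mul_le_one₀ (hφ.mem_Ioo y).2.le (exp_pos _).le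
      (exp_le_one_iff.2 (mul_nonpos_of_nonneg_of_nonpos hl hy))
  exact nonneg_of_mul_nonneg_left (nonneg_of_monotone_of_isBoundedUnder_atBot hg hmono hbdd x)
    (exp_pos _)

theorem deriv_add_mul_nonpos (hφ : FrontHyp fb θ cb φ) (hfb : ∀ s ∈ Ioo (0 : ℝ) θ, fb s ≤ 0)
    {a : ℝ} (ha : φ a < θ) : deriv φ a + cb * φ a ≤ 0 := by
  by_contra! hpos
  have hanti : Antitone φ := (strictAnti_of_deriv_neg hφ.decreasing).antitone
  have hd : ∀ x, HasDerivAt (fun x => deriv φ x + cb * φ x) (-fb (φ x)) x := fun x =>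
    ((hφ.hasDerivAt_deriv x).add ((hφ.hasDerivAt x).const_mul cb)).congr_deriv (by ring)
  have hmono : MonotoneOn (fun x => deriv φ x + cb * φ x) (Ici a) :=
    monotoneOn_of_hasDerivWithinAt_nonneg (convex_Ici a)
      (fun x _ => (hd x).continuousAt.continuousWithinAt) (fun x _ => (hd x).hasDerivWithinAt)
      fun x hx => neg_nonneg.2 <| hfb _
        ⟨(hφ.mem_Ioo x).1, (hanti (mem_Ici.1 (interior_subset hx))).trans_lt ha⟩
  obtain ⟨x, hx⟩ := (eventually_pos_of_monotoneOn_add_mul hmono hφ.limTop hpos).exists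
  exact (hφ.decreasing x).not_gt hx

end FrontHyp

/-- the minimal KPP speed strictly exceeds the bistable wave speed. -/
theorem cm_gt_cb (fm fb : ℝ → ℝ) (θ cb : ℝ) (φ : ℝ → ℝ)
    (hfm : KPPHyp fm) (hfb : BistableHyp fb θ) (hφ : FrontHyp fb θ cb φ)
    (horder : ∀ s : ℝ, 0 ≤ s → fb s ≤ fm s) :
    cb < 2 * Real.sqrt (deriv fm 0) := by
  by_contra! hcb
  set l := √(deriv fm 0)
  have hl : 0 < l := sqrt_pos.2 hfm.deriv_zero_pos
  have hfb_le : ∀ s ∈ Ioo (0 : ℝ) 1, fb s ≤ l ^ 2 * s := fun s hs => by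
    rw [sq_sqrt hfm.deriv_zero_pos.le]
    exact (horder s hs.1.le).trans (hfm.le_lin s hs)
  have hleft := hφ.deriv_add_mul_nonneg hl.le hcb hfb_le
  obtain ⟨a, ha⟩ := (hφ.limTop.eventually_lt_const hfb.theta_mem.1).exists
  have hright := hφ.deriv_add_mul_nonpos (fun s hs => (hfb.neg_low s hs).le) ha
  nlinarith [hleft a, (hφ.mem_Ioo a).1]
end
end

section
/- For every t > 0 one has the Gaussian bounds u(t,x) ≤ M·e^{K t}·e^{-(x + c t + L₁)²/(4t)} for all x ≤ -c t - L₁, and u(t,x) ≤ M·e^{K t}·e^{-(x + c t - L₂)²/(4t)} for all x ≥ L₂ - c t, where M := max(1, sup_{x∈ℝ} u_0(x)). -/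
open Real Filter Set

noncomputable section

open scoped Topology

/-!
Since `g(s) ≤ K s` for `s ≥ 0`, the nonnegative solution `u` is a subsolution of the linear
equation `E_t = E_xx + c E_x + K E`, which has the exact solutions `M e^{Kt + μ(x + ct + a) + μ²t}`.
When `μ (y + a) ≥ 0` on the support of `u₀`, such an exponential dominates `u₀` at `t = 0`, and the
weak maximum principle on `[0, t] × ℝ` (with the barrier `e^{(3 + |c|)t} (1 + x²)` taking care of
spatial infinity) keeps it above `u`. Choosing `μ = -(x + ct + a) / (2t)` turns the exponent into
`Kt - (x + ct + a)² / (4t)`; the sign condition on `μ` is what restricts `x` to the two half-lines.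
-/

lemma IsMaxOn.nonneg_of_hasDerivAt_Icc {f : ℝ → ℝ} {a b f' : ℝ} (h : IsMaxOn f (Icc a b) b)
    (hab : a < b) (hf : HasDerivAt f f' b) : 0 ≤ f' := by
  have hcone : a - b ∈ posTangentConeAt (Icc a b) b :=
    sub_mem_posTangentConeAt_of_segment_subset (by rw [segment_symm, segment_eq_Icc hab.le])
  have := h.localize.hasFDerivWithinAt_nonpos hf.hasFDerivAt.hasFDerivWithinAt hcone
  simp only [ContinuousLinearMap.toSpanSingleton_apply, smul_eq_mul] at this
  nlinarith

lemma IsLocalMax.deriv_deriv_nonpos {f : ℝ → ℝ} {a : ℝ} (h : IsLocalMax f a)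
    (hc : ContinuousAt f a) : deriv (deriv f) a ≤ 0 := by
  by_contra! hpos
  have hmin : IsLocalMin f a := isLocalMin_of_deriv_deriv_pos hpos h.deriv_eq_zero hc
  have hconst : f =ᶠ[𝓝 a] fun _ => f a := by
    filter_upwards [h, hmin] with x hmax hmin using le_antisymm hmax hmin
  simp [hconst.deriv.deriv_eq] at hpos

theorem ContinuousOn.exists_isMaxOn_prod_univ {α : Type*} [TopologicalSpace α] [T2Space α]
    {s : Set α} (hs : IsCompact s) {f : α × ℝ → ℝ} (hf : ContinuousOn f (s ×ˢ univ))
    {p : α × ℝ} (hp : p ∈ s ×ˢ univ) {R : ℝ} (hR : ∀ q ∈ s ×ˢ univ, R ≤ |q.2| → f q ≤ f p) :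
    ∃ q ∈ s ×ˢ univ, IsMaxOn f (s ×ˢ univ) q := by
  refine hf.exists_isMaxOn' (hs.isClosed.prod isClosed_univ) hp ?_
  rw [eventually_inf_principal]
  filter_upwards [(hs.prod (isCompact_Icc (a := -R) (b := R))).compl_mem_cocompact]
    with q hq hqs
  refine hR q hqs (le_of_lt ?_)
  by_contra! hle
  exact hq ⟨hqs.1, abs_le.1 hle⟩

/-- At a maximum over `[0, T] × ℝ` attained at a positive time, `ζ_t ≥ 0`, `ζ_x = 0` and
`ζ_xx ≤ 0`. -/
theorem IsMaxOn.le_of_hasDerivAt {c T t₀ x₀ ζt ζxx : ℝ} {ζ : ℝ → ℝ → ℝ} {ζx : ℝ → ℝ}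
    (hmax : IsMaxOn (fun p : ℝ × ℝ => ζ p.1 p.2) (Icc 0 T ×ˢ univ) (t₀, x₀))
    (ht₀ : t₀ ∈ Ioc 0 T) (hζt : HasDerivAt (fun τ => ζ τ x₀) ζt t₀)
    (hζx : ∀ y, HasDerivAt (ζ t₀) (ζx y) y) (hζxx : HasDerivAt ζx ζxx x₀) :
    ζxx + c * ζx x₀ ≤ ζt := by
  have hloc : IsLocalMax (ζ t₀) x₀ :=
    IsMaxOn.isLocalMax (fun y _ => @hmax (t₀, y) ⟨Ioc_subset_Icc_self ht₀, mem_univ y⟩) univ_mem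
  have hderiv : deriv (ζ t₀) = ζx := funext fun y => (hζx y).deriv
  have hζx₀ : ζx x₀ = 0 := hderiv ▸ hloc.deriv_eq_zero
  have hζxx_nonpos : ζxx ≤ 0 := by
    simpa [hderiv, hζxx.deriv] using hloc.deriv_deriv_nonpos (hζx x₀).continuousAt
  have hζt_nonneg : 0 ≤ ζt :=
    IsMaxOn.nonneg_of_hasDerivAt_Icc
      (fun τ hτ => @hmax (τ, x₀) ⟨⟨hτ.1, hτ.2.trans ht₀.2⟩, mem_univ x₀⟩) ht₀.1 hζt
  rw [hζx₀]
  linarith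

/-- `z` is a classical subsolution of `z_t = z_xx + c z_x + K z` on `(0, T] × ℝ`; the derivatives
are carried along as the functions `zt`, `zx`, `zxx`. -/
structure IsParabolicSubsolution (c K T : ℝ) (z zt zx zxx : ℝ → ℝ → ℝ) : Prop where
  hasDerivAt_time : ∀ t ∈ Ioc 0 T, ∀ x, HasDerivAt (fun τ => z τ x) (zt t x) t
  hasDerivAt_space : ∀ t ∈ Ioc 0 T, ∀ x, HasDerivAt (z t) (zx t x) x
  hasDerivAt_space_space : ∀ t ∈ Ioc 0 T, ∀ x, HasDerivAt (zx t) (zxx t x) x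
  le : ∀ t ∈ Ioc 0 T, ∀ x, zt t x ≤ zxx t x + c * zx t x + K * z t x

/-- A strict supersolution of `φ_t = φ_xx + c φ_x` that grows at spatial infinity. -/
def parabolicBarrier (c t x : ℝ) : ℝ := exp ((3 + |c|) * t) * (1 + x ^ 2)

section parabolicBarrier

variable (c : ℝ)

lemma parabolicBarrier_pos (t x : ℝ) : 0 < parabolicBarrier c t x := by
  unfold parabolicBarrier; positivity

lemma one_add_sq_le_parabolicBarrier {t : ℝ} (ht : 0 ≤ t) (x : ℝ) :
    1 + x ^ 2 ≤ parabolicBarrier c t x :=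
  le_mul_of_one_le_left (by positivity) (one_le_exp (by positivity))

lemma hasDerivAt_parabolicBarrier_time (t x : ℝ) :
    HasDerivAt (fun τ => parabolicBarrier c τ x) ((3 + |c|) * parabolicBarrier c t x) t :=
  ((((hasDerivAt_id' t).const_mul (3 + |c|)).exp).mul_const (1 + x ^ 2)).congr_deriv <| by
    unfold parabolicBarrier; ring

lemma hasDerivAt_parabolicBarrier_space (t x : ℝ) :
    HasDerivAt (parabolicBarrier c t) (exp ((3 + |c|) * t) * (2 * x)) x :=
  (((hasDerivAt_pow 2 x).const_add 1).const_mul _).congr_deriv (by simp)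

lemma hasDerivAt_parabolicBarrier_space_space (t x : ℝ) :
    HasDerivAt (fun y => exp ((3 + |c|) * t) * (2 * y)) (exp ((3 + |c|) * t) * 2) x :=
  (((hasDerivAt_id' x).const_mul 2).const_mul _).congr_deriv (by ring)

lemma parabolicBarrier_strict_supersolution (t x : ℝ) :
    exp ((3 + |c|) * t) * 2 + c * (exp ((3 + |c|) * t) * (2 * x)) <
      (3 + |c|) * parabolicBarrier c t x := by
  have hcx : c * x ≤ |c| * |x| := (le_abs_self _).trans (abs_mul c x).le
  have h := mul_nonneg (abs_nonneg c) (sq_nonneg (|x| - 1))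
  rw [sub_sq, sq_abs] at h
  have hlt : 2 + c * (2 * x) < (3 + |c|) * (1 + x ^ 2) := by nlinarith [sq_nonneg x]
  unfold parabolicBarrier
  nlinarith [exp_pos ((3 + |c|) * t)]

end parabolicBarrier

namespace IsParabolicSubsolution

variable {c K T : ℝ} {z zt zx zxx : ℝ → ℝ → ℝ}

/-- After the substitution `z ↦ e^{-Kt} z`, subtracting a multiple of the barrier makes the
subsolution strict, so it cannot have a maximum at a positive time. -/
theorem not_isMaxOn (hz : IsParabolicSubsolution c K T z zt zx zxx) {ε : ℝ} (hε : 0 < ε)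
    {t₀ x₀ : ℝ} (ht₀ : t₀ ∈ Ioc 0 T) :
    ¬ IsMaxOn (fun p : ℝ × ℝ => exp (-K * p.1) * z p.1 p.2 - ε * parabolicBarrier c p.1 p.2)
      (Icc 0 T ×ˢ univ) (t₀, x₀) := by
  intro hmax
  set e := exp (-K * t₀)
  have hexp : HasDerivAt (fun τ => exp (-K * τ)) (-K * e) t₀ :=
    ((hasDerivAt_id' t₀).const_mul (-K)).exp.congr_deriv (by ring)
  have hmain := IsMaxOn.le_of_hasDerivAt (c := c)
    (ζ := fun t x => exp (-K * t) * z t x - ε * parabolicBarrier c t x) hmax ht₀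
    (((hexp.mul (hz.hasDerivAt_time t₀ ht₀ x₀)).sub
      ((hasDerivAt_parabolicBarrier_time c t₀ x₀).const_mul ε)))
    (fun y => ((hz.hasDerivAt_space t₀ ht₀ y).const_mul e).sub
      ((hasDerivAt_parabolicBarrier_space c t₀ y).const_mul ε))
    (((hz.hasDerivAt_space_space t₀ ht₀ x₀).const_mul e).sub
      ((hasDerivAt_parabolicBarrier_space_space c t₀ x₀).const_mul ε))
  have hsub := mul_le_mul_of_nonneg_left (hz.le t₀ ht₀ x₀) (exp_pos (-K * t₀)).le
  have hstrict := mul_lt_mul_of_pos_left (parabolicBarrier_strict_supersolution c t₀ x₀) hε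
  linarith

theorem exp_mul_le_mul_parabolicBarrier (hz : IsParabolicSubsolution c K T z zt zx zxx)
    (hcont : ContinuousOn (fun p : ℝ × ℝ => z p.1 p.2) (Icc 0 T ×ˢ univ)) {C : ℝ}
    (hC : ∀ t ∈ Icc 0 T, ∀ x, exp (-K * t) * z t x ≤ C) (h0 : ∀ x, z 0 x ≤ 0)
    {ε : ℝ} (hε : 0 < ε) :
    ∀ t ∈ Icc 0 T, ∀ x, exp (-K * t) * z t x ≤ ε * parabolicBarrier c t x := by
  by_contra! ⟨t₁, ht₁, x₁, h₁⟩
  set ζ : ℝ × ℝ → ℝ := fun p => exp (-K * p.1) * z p.1 p.2 - ε * parabolicBarrier c p.1 p.2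
  have hfar : ∀ q ∈ Icc 0 T ×ˢ univ, C / ε + 1 ≤ |q.2| → ζ q ≤ ζ (t₁, x₁) := by
    rintro ⟨t, x⟩ ⟨ht, -⟩ hx
    dsimp only at ht hx
    have hCx : C ≤ ε * (1 + x ^ 2) := by
      have hCε := (div_le_iff₀ hε).1 (le_sub_iff_add_le.2 hx)
      nlinarith [sq_abs x, sq_nonneg (|x| - 1)]
    have := mul_le_mul_of_nonneg_left (one_add_sq_le_parabolicBarrier c ht.1 x) hε.le
    have := hC t ht x
    simp only [ζ]
    linarith
  have hζcont : ContinuousOn ζ (Icc 0 T ×ˢ univ) := by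
    simp only [ζ, parabolicBarrier]
    fun_prop
  obtain ⟨⟨t₀, x₀⟩, hq₀, hmax⟩ :=
    hζcont.exists_isMaxOn_prod_univ isCompact_Icc (p := (t₁, x₁)) ⟨ht₁, mem_univ _⟩ hfar
  have hpos : 0 < ζ (t₀, x₀) := (sub_pos.2 h₁).trans_le (@hmax (t₁, x₁) ⟨ht₁, mem_univ _⟩)
  have ht₀ : t₀ ∈ Ioc 0 T := by
    refine ⟨hq₀.1.1.lt_of_ne ?_, hq₀.1.2⟩
    rintro rfl
    have := h0 x₀
    have := parabolicBarrier_pos c 0 x₀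
    simp only [ζ, mul_zero, exp_zero, one_mul] at hpos
    nlinarith
  exact hz.not_isMaxOn hε ht₀ hmax

theorem nonpos_of_initial_nonpos (hz : IsParabolicSubsolution c K T z zt zx zxx)
    (hcont : ContinuousOn (fun p : ℝ × ℝ => z p.1 p.2) (Icc 0 T ×ˢ univ))
    (hbdd : ∃ B, ∀ t ∈ Icc 0 T, ∀ x, z t x ≤ B) (h0 : ∀ x, z 0 x ≤ 0) :
    ∀ t ∈ Icc 0 T, ∀ x, z t x ≤ 0 := by
  obtain ⟨B, hB⟩ := hbdd
  have hC : ∀ t ∈ Icc 0 T, ∀ x, exp (-K * t) * z t x ≤ |B| * exp (|K| * T) := by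
    intro t ht x
    have hexp : exp (-K * t) ≤ exp (|K| * T) := by
      refine exp_le_exp.2 ?_
      calc -K * t ≤ |K| * t := mul_le_mul_of_nonneg_right (neg_le_abs K) ht.1
        _ ≤ |K| * T := mul_le_mul_of_nonneg_left ht.2 (abs_nonneg K)
    calc exp (-K * t) * z t x ≤ exp (-K * t) * |B| := by
          gcongr; exact (hB t ht x).trans (le_abs_self B)
      _ ≤ |B| * exp (|K| * T) := by rw [mul_comm]; gcongr
  intro t ht x
  by_contra! hpos
  have hφ := parabolicBarrier_pos c t x
  have := hz.exp_mul_le_mul_parabolicBarrier hcont hC h0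
    (ε := exp (-K * t) * z t x / (2 * parabolicBarrier c t x)) (by positivity) t ht x
  rw [div_mul_eq_mul_div, mul_div_mul_right _ _ hφ.ne'] at this
  nlinarith [exp_pos (-K * t)]

end IsParabolicSubsolution

/-- Comparison with the exact solution `M e^{Kt + μ(x + ct + a) + μ²t}` of the linearised
equation `E_t = E_xx + c E_x + K E`. -/
theorem le_mul_exp_of_initial_le {K c M μ a : ℝ} {g : ℝ → ℝ} {u : ℝ → ℝ → ℝ}
    (hgK : ∀ s : ℝ, 0 ≤ s → g s ≤ K * s) (hnonneg : ∀ t : ℝ, 0 ≤ t → ∀ x, 0 ≤ u t x)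
    (hbdd : ∃ B : ℝ, ∀ t : ℝ, 0 ≤ t → ∀ x, u t x ≤ B)
    (hcont : ContinuousOn (fun p : ℝ × ℝ => u p.1 p.2) (Ici 0 ×ˢ univ))
    (ht : ∀ t : ℝ, 0 < t → ∀ x : ℝ, DifferentiableAt ℝ (fun τ => u τ x) t)
    (hx : ∀ t : ℝ, 0 < t → ContDiff ℝ 2 (u t))
    (hpde : ∀ t : ℝ, 0 < t → ∀ x : ℝ,
      deriv (fun τ => u τ x) t = deriv (deriv (u t)) x + c * deriv (u t) x + g (u t x))
    (hM : 0 ≤ M) (h0 : ∀ y, u 0 y ≤ M * exp (μ * (y + a))) {t : ℝ} (htpos : 0 < t) (x : ℝ) :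
    u t x ≤ M * exp (K * t) * exp (μ * (x + c * t + a) + μ ^ 2 * t) := by
  set E : ℝ → ℝ → ℝ := fun s y => M * exp (K * s + μ * (y + c * s + a) + μ ^ 2 * s)
  have hE_time : ∀ s y, HasDerivAt (fun τ => E τ y) ((K + μ * c + μ ^ 2) * E s y) s := by
    intro s y
    have hlin := ((hasDerivAt_id' s).const_mul K).add
      (((((hasDerivAt_id' s).const_mul c).const_add y).add_const a).const_mul μ) |>.add
      ((hasDerivAt_id' s).const_mul (μ ^ 2))
    exact (hlin.exp.const_mul M).congr_deriv (by simp only [E, Pi.add_apply]; ring)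
  have hE_space : ∀ s y, HasDerivAt (E s) (μ * E s y) y := by
    intro s y
    have hlin := ((((hasDerivAt_id' y).add_const (c * s)).add_const a).const_mul μ).const_add
      (K * s) |>.add_const (μ ^ 2 * s)
    exact (hlin.exp.const_mul M).congr_deriv (by ring)
  have hsub : IsParabolicSubsolution c K t (fun s y => u s y - E s y)
      (fun s y => deriv (fun τ => u τ y) s - (K + μ * c + μ ^ 2) * E s y)
      (fun s y => deriv (u s) y - μ * E s y)
      (fun s y => deriv (deriv (u s)) y - μ * (μ * E s y)) := by
    refine ⟨fun s hs y => (ht s hs.1 y).hasDerivAt.sub (hE_time s y),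
      fun s hs y => ((hx s hs.1).differentiable (by norm_num) y).hasDerivAt.sub (hE_space s y),
      fun s hs y => ((hx s hs.1).differentiable_deriv_two y).hasDerivAt.sub
        ((hE_space s y).const_mul μ), fun s hs y => ?_⟩
    have := hgK _ (hnonneg s hs.1.le y)
    rw [hpde s hs.1 y]
    linarith
  obtain ⟨B, hB⟩ := hbdd
  have hE_nonneg : ∀ s y, 0 ≤ E s y := fun s y => by positivity
  have hle := hsub.nonpos_of_initial_nonpos
    ((hcont.mono (prod_mono Icc_subset_Ici_self subset_rfl)).sub (by fun_prop))
    ⟨B, fun s hs y => by linarith [hB s hs.1 y, hE_nonneg s y]⟩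
    (fun y => by simpa [E] using h0 y)
    t ⟨htpos.le, le_rfl⟩ x
  calc u t x ≤ E t x := sub_nonpos.1 hle
    _ = M * exp (K * t) * exp (μ * (x + c * t + a) + μ ^ 2 * t) := by
      rw [mul_assoc, ← exp_add, ← add_assoc]

lemma le_mul_exp_of_forall_support {f φ : ℝ → ℝ} {M : ℝ} (hM : 0 ≤ M) (hf : ∀ y, f y ≤ M)
    (hφ : ∀ y ∈ Function.support f, 0 ≤ φ y) (y : ℝ) : f y ≤ M * exp (φ y) := by
  by_cases hy : f y = 0
  · rw [hy]; positivity
  · exact (hf y).trans (le_mul_of_one_le_right hM (one_le_exp (hφ y hy)))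

/-- The exponent `μ ξ + μ² t` is minimised at `μ = -ξ / (2t)`. -/
lemma neg_div_mul_add_sq_mul (ξ : ℝ) {t : ℝ} (ht : t ≠ 0) :
    -ξ / (2 * t) * ξ + (-ξ / (2 * t)) ^ 2 * t = -ξ ^ 2 / (4 * t) := by
  field_simp
  ring

theorem gaussian_upper_bound_general (L₁ L₂ K c : ℝ) (g : ℝ → ℝ) (u0 : ℝ → ℝ) (u : ℝ → ℝ → ℝ)
    (hgK : ∀ s : ℝ, 0 ≤ s → g s ≤ K * s)
    (hu0c : Continuous u0)
    (hsupp : Function.support u0 ⊆ Set.Icc (-L₁) L₂)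
    (hnonneg : ∀ t : ℝ, 0 ≤ t → ∀ x, 0 ≤ u t x)
    (hbdd : ∃ M : ℝ, ∀ t : ℝ, 0 ≤ t → ∀ x, u t x ≤ M)
    (hcont : ContinuousOn (fun p : ℝ × ℝ => u p.1 p.2) (Set.Ici 0 ×ˢ Set.univ))
    (ht : ∀ t : ℝ, 0 < t → ∀ x : ℝ, DifferentiableAt ℝ (fun τ => u τ x) t)
    (hx : ∀ t : ℝ, 0 < t → ContDiff ℝ 2 (fun y => u t y))
    (hpde : ∀ t : ℝ, 0 < t → ∀ x : ℝ,
      deriv (fun τ => u τ x) t =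
        deriv (deriv (fun y => u t y)) x + c * deriv (fun y => u t y) x + g (u t x))
    (hinit : ∀ x, u 0 x = u0 x) :
    ∀ t : ℝ, 0 < t →
      (∀ x : ℝ, x ≤ -c * t - L₁ →
        u t x ≤ max 1 (⨆ x, u0 x) * Real.exp (K * t) *
          Real.exp (-(x + c * t + L₁) ^ 2 / (4 * t))) ∧
      (∀ x : ℝ, L₂ - c * t ≤ x →
        u t x ≤ max 1 (⨆ x, u0 x) * Real.exp (K * t) *
          Real.exp (-(x + c * t - L₂) ^ 2 / (4 * t))) := by
  set M := max 1 (⨆ x, u0 x)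
  have hM : 0 ≤ M := zero_le_one.trans (le_max_left _ _)
  have hu0M : ∀ y, u0 y ≤ M := fun y =>
    (le_ciSup (hu0c.bddAbove_range_of_hasCompactSupport
      (HasCompactSupport.of_support_subset_isCompact isCompact_Icc hsupp)) y).trans
      (le_max_right _ _)
  have gaussian : ∀ t > 0, ∀ x a, (∀ y ∈ Function.support u0, 0 ≤ -(x + c * t + a) * (y + a)) →
      u t x ≤ M * exp (K * t) * exp (-(x + c * t + a) ^ 2 / (4 * t)) := by
    intro t htpos x a ha
    have h0 : ∀ y, u 0 y ≤ M * exp (-(x + c * t + a) / (2 * t) * (y + a)) := by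
      simp only [hinit]
      refine le_mul_exp_of_forall_support hM hu0M fun y hy => ?_
      rw [div_mul_eq_mul_div]
      exact div_nonneg (ha y hy) (by positivity)
    have := le_mul_exp_of_initial_le hgK hnonneg hbdd hcont ht hx hpde hM h0 htpos x
    rwa [neg_div_mul_add_sq_mul _ htpos.ne'] at this
  intro t htpos
  refine ⟨fun x hx => gaussian t htpos x L₁ fun y hy => ?_, fun x hx => ?_⟩
  · exact mul_nonneg (by linarith) (by linarith [(hsupp hy).1])
  · have := gaussian t htpos x (-L₂) fun y hy =>
      mul_nonneg_of_nonpos_of_nonpos (by linarith) (by linarith [(hsupp hy).2])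
    rwa [← sub_eq_add_neg] at this

/-- Gaussian upper bounds for solutions of `u_t = u_xx + c u_x + g(u)`
with compactly supported initial data supported in `[-L₁, L₂]` and `g(s) ≤ K s` for `s ≥ 0`. -/
theorem gaussian_upper_bound (L₁ L₂ K c : ℝ) (g : ℝ → ℝ) (u0 : ℝ → ℝ) (u : ℝ → ℝ → ℝ)
    (hL₁ : 0 < L₁) (hL₂ : 0 < L₂) (hK : 0 < K)
    (hg : ContDiff ℝ 1 g) (hgK : ∀ s : ℝ, 0 ≤ s → g s ≤ K * s)
    (hu0c : Continuous u0) (hu0n : ∀ x, 0 ≤ u0 x)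
    (hsupp : Function.support u0 ⊆ Set.Icc (-L₁) L₂)
    (hnonneg : ∀ t : ℝ, 0 ≤ t → ∀ x, 0 ≤ u t x)
    (hbdd : ∃ M : ℝ, ∀ t : ℝ, 0 ≤ t → ∀ x, u t x ≤ M)
    (hcont : ContinuousOn (fun p : ℝ × ℝ => u p.1 p.2) (Set.Ici 0 ×ˢ Set.univ))
    (ht : ∀ t : ℝ, 0 < t → ∀ x : ℝ, DifferentiableAt ℝ (fun τ => u τ x) t)
    (hx : ∀ t : ℝ, 0 < t → ContDiff ℝ 2 (fun y => u t y))
    (hpde : ∀ t : ℝ, 0 < t → ∀ x : ℝ,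
      deriv (fun τ => u τ x) t =
        deriv (deriv (fun y => u t y)) x + c * deriv (fun y => u t y) x + g (u t x))
    (hinit : ∀ x, u 0 x = u0 x) :
    ∀ t : ℝ, 0 < t →
      (∀ x : ℝ, x ≤ -c * t - L₁ →
        u t x ≤ max 1 (⨆ x, u0 x) * Real.exp (K * t) *
          Real.exp (-(x + c * t + L₁) ^ 2 / (4 * t))) ∧
      (∀ x : ℝ, L₂ - c * t ≤ x →
        u t x ≤ max 1 (⨆ x, u0 x) * Real.exp (K * t) *
          Real.exp (-(x + c * t - L₂) ^ 2 / (4 * t))) :=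
  gaussian_upper_bound_general L₁ L₂ K c g u0 u hgK hu0c hsupp hnonneg hbdd hcont ht hx hpde hinit
end
end
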